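/- arXiv:1811.05169 — 2 statements merged into one kernel-verified Lean document; each statement's English description precedes it below -/
import Mathlib

section
/- The function θ(ε) := inf { d((1/2)x + (1/2)y, ∂K) : x, y ∈ K, d(x,y) = ε } is monotone increasing in ε on the interval (0, diam(K)), for K a compact strictly convex subset of ℝ^k. -/
/-- θ(ε): the infimum of distances from midpoints of ε-separated pairs in K
to the boundary of K. -/
noncomputable def thetaFun {k : ℕ} (K : Set (EuclideanSpace ℝ (Fin k))) (ε : ℝ) : ℝ :=
  sInf {d : ℝ | ∃ x ∈ K, ∃ y ∈ K, dist x y = ε ∧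
    d = Metric.infDist (midpoint ℝ x y) (frontier K)}

set_option maxHeartbeats 1000000 in
theorem thetaFun_monotone {k : ℕ}
    (K : Set (EuclideanSpace ℝ (Fin k))) (hK : IsCompact K) (hKc : Convex ℝ K)
    (hKs : StrictConvex ℝ K) (ε₁ ε₂ : ℝ) (h1 : 0 < ε₁) (h12 : ε₁ ≤ ε₂)
    (h2 : ε₂ < Metric.diam K) :
    thetaFun K ε₁ ≤ thetaFun K ε₂ := by
  have hε₂ : 0 < ε₂ := lt_of_lt_of_le h1 h12
  -- K is nonempty
  have hKne : K.Nonempty := by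
    by_contra h
    rw [Set.not_nonempty_iff_eq_empty] at h
    rw [h, Metric.diam_empty] at h2
    linarith
  apply csInf_le_csInf
  · -- bounded below by 0
    exact ⟨0, fun d ⟨x, _, y, _, _, hd⟩ => hd ▸ Metric.infDist_nonneg⟩
  · -- the ε₂ set is nonempty: find a pair at distance ε₂
    have hcont : ContinuousOn (fun p : EuclideanSpace ℝ (Fin k) × EuclideanSpace ℝ (Fin k) =>
        dist p.1 p.2) (K ×ˢ K) := by fun_prop
    obtain ⟨⟨a, b⟩, habK, hmax⟩ := (hK.prod hK).exists_isMaxOn (hKne.prod hKne) hcont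
    obtain ⟨ha, hb⟩ := habK
    have hab : ε₂ < dist a b := by
      refine lt_of_lt_of_le h2 (Metric.diam_le_of_forall_dist_le dist_nonneg ?_)
      intro p hp q hq
      have h := hmax (Set.mk_mem_prod hp hq)
      simpa using h
    have hdiam : 0 < dist a b := lt_trans hε₂ hab
    set s : ℝ := ε₂ / dist a b with hs
    have hs0 : 0 < s := div_pos hε₂ hdiam
    have hs1 : s ≤ 1 := le_of_lt ((div_lt_one hdiam).mpr hab)
    set y : EuclideanSpace ℝ (Fin k) := (1 - s) • a + s • b with hy
    have hyK : y ∈ K := hKc ha hb (by linarith) hs0.le (by ring)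
    have hdist : dist a y = ε₂ := by
      have : a - y = s • (a - b) := by
        rw [hy]; module
      rw [dist_eq_norm, this, norm_smul, Real.norm_eq_abs, abs_of_pos hs0,
        ← dist_eq_norm, hs]
      field_simp
    exact ⟨_, a, ha, y, hyK, hdist, rfl⟩
  · -- every element of the ε₂ set lies in the ε₁ set
    rintro d ⟨x, hx, y, hy, hxy, rfl⟩
    set m := midpoint ℝ x y with hm
    have hmK : m ∈ K := by
      rw [hm, midpoint_eq_smul_add, invOf_eq_inv, smul_add]
      exact hKc hx hy (by norm_num) (by norm_num) (by norm_num)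
    set t : ℝ := ε₁ / ε₂ with ht
    have ht0 : 0 < t := div_pos h1 hε₂
    have ht1 : t ≤ 1 := (div_le_one hε₂).mpr h12
    set x' : EuclideanSpace ℝ (Fin k) := t • x + (1 - t) • m with hx'
    set y' : EuclideanSpace ℝ (Fin k) := t • y + (1 - t) • m with hy'
    have hx'K : x' ∈ K := hKc hx hmK ht0.le (by linarith) (by ring)
    have hy'K : y' ∈ K := hKc hy hmK ht0.le (by linarith) (by ring)
    have hdist' : dist x' y' = ε₁ := by
      have : x' - y' = t • (x - y) := by
        rw [hx', hy']; module
      rw [dist_eq_norm, this, norm_smul, Real.norm_eq_abs, abs_of_pos ht0,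
        ← dist_eq_norm, hxy, ht]
      field_simp
    have hmid : midpoint ℝ x' y' = m := by
      simp only [hx', hy', hm, midpoint_eq_smul_add, invOf_eq_inv]
      have : ((2:ℝ))⁻¹ = 1/2 := by norm_num
      rw [this]; module
    exact ⟨x', hx'K, y', hy'K, hdist', by rw [hmid]⟩
end

section
/- Let Δ ≥ 1, let i, j be natural numbers with j ≤ m and i ≥ j + 1 for a fixed m ∈ ℕ, and let 0 < Λ < 1. Then (Δ^j · Λ^{i−j})^{1/i} ≤ Δ^m · Λ^{1/(1+m)}. -/
theorem geometric_mean_bound (Δ Λ : ℝ) (hΔ : 1 ≤ Δ) (m i j : ℕ)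
    (hjm : j ≤ m) (hij : j + 1 ≤ i) (hΛ0 : 0 < Λ) (hΛ1 : Λ < 1) :
    (Δ ^ j * Λ ^ (i - j)) ^ ((1 : ℝ) / i) ≤ Δ ^ m * Λ ^ ((1 : ℝ) / (1 + m)) := by
  have hΔ0 : (0:ℝ) ≤ Δ := le_trans zero_le_one hΔ
  have hi0 : 0 < i := lt_of_lt_of_le (Nat.succ_pos j) hij
  have hiR : (0:ℝ) < (i:ℝ) := by exact_mod_cast hi0
  have hji : j ≤ i := le_trans (Nat.le_succ j) hij
  have hsub : ((i - j : ℕ) : ℝ) = (i:ℝ) - (j:ℝ) := by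
    push_cast [Nat.cast_sub hji]; ring
  have key : (Δ ^ j * Λ ^ (i - j)) ^ ((1 : ℝ) / i)
      = Δ ^ ((j:ℝ) / i) * Λ ^ (((i:ℝ) - j) / i) := by
    rw [← Real.rpow_natCast Δ j, ← Real.rpow_natCast Λ (i - j),
      Real.mul_rpow (Real.rpow_nonneg hΔ0 _) (Real.rpow_nonneg hΛ0.le _),
      ← Real.rpow_mul hΔ0, ← Real.rpow_mul hΛ0.le, hsub]
    ring_nf
  rw [key]
  have h1 : Δ ^ ((j:ℝ) / i) ≤ Δ ^ (m:ℕ) := by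
    rw [← Real.rpow_natCast Δ m]
    apply Real.rpow_le_rpow_of_exponent_le hΔ
    have : (j:ℝ) / i ≤ (j:ℝ) := by
      apply div_le_self (by positivity)
      exact_mod_cast hi0
    exact this.trans (by exact_mod_cast hjm)
  have h2 : Λ ^ (((i:ℝ) - j) / i) ≤ Λ ^ ((1:ℝ) / (1 + m)) := by
    apply Real.rpow_le_rpow_of_exponent_ge hΛ0 hΛ1.le
    rw [div_le_div_iff₀ (by positivity) hiR]
    have hijR : (j:ℝ) + 1 ≤ (i:ℝ) := by exact_mod_cast hij
    have hjmR : (j:ℝ) ≤ (m:ℝ) := by exact_mod_cast hjm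
    nlinarith
  calc Δ ^ ((j:ℝ) / i) * Λ ^ (((i:ℝ) - j) / i)
      ≤ Δ ^ (m:ℕ) * Λ ^ (((i:ℝ) - j) / i) := by
        apply mul_le_mul_of_nonneg_right h1 (Real.rpow_nonneg hΛ0.le _)
    _ ≤ Δ ^ (m:ℕ) * Λ ^ ((1:ℝ) / (1 + m)) := by
        apply mul_le_mul_of_nonneg_left h2 (pow_nonneg hΔ0 _)
end
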